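/- Let S be a numerical semigroup, a, b ∈ ℕ \ S, and write Q_a := Q_a(S), g := g(S). Then: (a) Q_a is nonempty if and only if M_a is not divisorial; (b) if Q_a is nonempty, then M_a is the maximum of Q_a with respect to the ⋆-order; (c) if b ≤ a, then M_b ≤⋆ M_a; (d) if Q_a = ∅, then Q_b = ∅ for every b ∈ ℕ \ S with b ≤ a; (e) if both a ∉ S and g − a ∉ S, then Q_a ≠ ∅. -/
import Mathlib


/-- A numerical semigroup: a subset of ℕ containing 0, closed under addition,
with finite complement. -/
structure NumSgp where
  carrier : Set ℕ
  zero_mem : 0 ∈ carrier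
  add_mem : ∀ a ∈ carrier, ∀ b ∈ carrier, a + b ∈ carrier
  cofinite : carrierᶜ.Finite

/-- The copy of `S` inside ℤ. -/
def natS (S : NumSgp) : Set ℤ := (fun n : ℕ => (n : ℤ)) '' S.carrier

/-- A fractional ideal of `S`: a nonempty subset of ℤ, bounded below, with `I + S ⊆ I`. -/
def IsFracIdeal (S : NumSgp) (I : Set ℤ) : Prop :=
  I.Nonempty ∧ BddBelow I ∧ ∀ i ∈ I, ∀ s ∈ natS S, i + s ∈ I

/-- `(I − J) = {x ∈ ℤ : x + J ⊆ I}`. -/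
def idealSub (I J : Set ℤ) : Set ℤ := {x : ℤ | ∀ j ∈ J, x + j ∈ I}

/-- `F₀(S)`: fractional ideals `I` with `S ⊆ I ⊆ ℕ` (hence with minimal element 0). -/
def F0 (S : NumSgp) : Set (Set ℤ) :=
  {I | IsFracIdeal S I ∧ natS S ⊆ I ∧ I ⊆ {x : ℤ | 0 ≤ x}}

/-- The `v`-operation (divisorial closure): `I ↦ (S − (S − I))`. -/
def vOp (S : NumSgp) (I : Set ℤ) : Set ℤ := idealSub (natS S) (idealSub (natS S) I)

/-- An ideal is divisorial if it is `v`-closed. -/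
def Divisorial (S : NumSgp) (I : Set ℤ) : Prop := vOp S I = I

/-- `G₀(S)`: the nondivisorial ideals in `F₀(S)`. -/
def G0 (S : NumSgp) : Set (Set ℤ) := {I | I ∈ F0 S ∧ ¬ Divisorial S I}

/-- The action of the star operation `⋆_I` generated by `I`:
`J ↦ J^{⋆_I} = J^v ∩ (I − (I − J))`. -/
def starI (S : NumSgp) (I J : Set ℤ) : Set ℤ := vOp S J ∩ idealSub I (idealSub I J)

/-- The action of the star operation `⋆_Δ = inf_{I ∈ Δ} ⋆_I` generated by a set `Δ` of ideals:
`J ↦ J^{⋆_Δ} = J^v ∩ ⋂_{I ∈ Δ} (I − (I − J))`. -/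
def starD (S : NumSgp) (Δ : Set (Set ℤ)) (J : Set ℤ) : Set ℤ :=
  vOp S J ∩ ⋂ I ∈ Δ, idealSub I (idealSub I J)

/-- The ⋆-order: `I ≤⋆ J` iff `I` is `⋆_J`-closed. -/
def starle (S : NumSgp) (I J : Set ℤ) : Prop := starI S J I = I

/-- A star operation on `S`, given by its action on subsets of ℤ; it is normalized to be
the identity outside the fractional ideals, so that two star operations are equal iff they
agree on all fractional ideals. -/
structure StarOp (S : NumSgp) where
  toFun : Set ℤ → Set ℤ
  isFrac : ∀ I, IsFracIdeal S I → IsFracIdeal S (toFun I)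
  subset_star : ∀ I, IsFracIdeal S I → I ⊆ toFun I
  mono : ∀ I J, IsFracIdeal S I → IsFracIdeal S J → I ⊆ J → toFun I ⊆ toFun J
  idem : ∀ I, IsFracIdeal S I → toFun (toFun I) = toFun I
  transl : ∀ I, IsFracIdeal S I → ∀ a : ℤ,
    toFun ((fun x => a + x) '' I) = (fun x => a + x) '' toFun I
  star_S : toFun (natS S) = natS S
  default_eq : ∀ I, ¬ IsFracIdeal S I → toFun I = I

/-- The order on star operations: `s ≤ t` iff `I^s ⊆ I^t` for every fractional ideal `I`. -/
def StarOp.le {S : NumSgp} (s t : StarOp S) : Prop :=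
  ∀ I, IsFracIdeal S I → s.toFun I ⊆ t.toFun I

/-- A star operation `s` is prime if whenever `s ≥ t ∧ u` (the infimum of two star operations
being given by `I ↦ I^t ∩ I^u`), then `s ≥ t` or `s ≥ u`. -/
def StarOp.IsPrime {S : NumSgp} (s : StarOp S) : Prop :=
  ∀ t u : StarOp S,
    (∀ I, IsFracIdeal S I → t.toFun I ∩ u.toFun I ⊆ s.toFun I) →
    t.le s ∨ u.le s

/-- `I ∈ F₀(S)` is an atom if the star operation `⋆_I` is prime. -/
def AtomIdeal (S : NumSgp) (I : Set ℤ) : Prop :=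
  I ∈ F0 S ∧ ∀ t u : StarOp S,
    (∀ J, IsFracIdeal S J → t.toFun J ∩ u.toFun J ⊆ starI S I J) →
    (∀ J, IsFracIdeal S J → t.toFun J ⊆ starI S I J) ∨
    (∀ J, IsFracIdeal S J → u.toFun J ⊆ starI S I J)

/-- `M_a = {x ∈ ℕ : a − x ∉ S}`, the biggest ideal in `F₀(S)` not containing `a`. -/
def Mdual (S : NumSgp) (a : ℕ) : Set ℤ := {x : ℤ | 0 ≤ x ∧ ((a : ℤ) - x) ∉ natS S}

/-- `Q_a(S) = {I ∈ F₀(S) : a = sup(ℕ \ I), a ∈ I^v}`. -/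
def Qa (S : NumSgp) (a : ℕ) : Set (Set ℤ) :=
  {I | I ∈ F0 S ∧ (a : ℤ) ∉ I ∧ (∀ x : ℤ, (a : ℤ) < x → x ∈ I) ∧ (a : ℤ) ∈ vOp S I}

/-- The number of antichains (with respect to inclusion) of a family of ideals. -/
noncomputable def numInclAnti (Q : Set (Set ℤ)) : ℕ :=
  Set.ncard {Δ : Set (Set ℤ) | Δ ⊆ Q ∧ IsAntichain (· ⊆ ·) Δ}

/-- The `n`-th Dedekind number: the number of antichains of the power set of an
`n`-element set, ordered by inclusion. -/
noncomputable def dedekind (n : ℕ) : ℕ :=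
  Nat.card {A : Set (Set (Fin n)) // IsAntichain (· ⊆ ·) A}

/-- `T(S) = (S − M_S) \ S`. -/
def Tset (S : NumSgp) : Set ℤ :=
  idealSub (natS S) ((fun n : ℕ => (n : ℤ)) '' (S.carrier \ {0})) \ natS S

/-- The type `t(S) = |T(S)|`. -/
noncomputable def typeNum (S : NumSgp) : ℕ := (Tset S).ncard

/-- The Frobenius number `g(S)`: the largest integer not in `S`. -/
noncomputable def frob (S : NumSgp) : ℕ := sSup S.carrierᶜ

/-- The multiplicity `μ(S)`: the smallest nonzero element of `S`. -/
noncomputable def multNum (S : NumSgp) : ℕ := sInf (S.carrier \ {0})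

/-- The degree of singularity `δ(S) = |ℕ \ S|`. -/
noncomputable def deltaNum (S : NumSgp) : ℕ := S.carrierᶜ.ncard

/-- `S` is symmetric if `g(S) − a ∈ S` for every `a ∈ ℕ \ S`. -/
def IsSymmetricSgp (S : NumSgp) : Prop :=
  ∀ a : ℕ, a ∉ S.carrier → ((frob S : ℤ) - (a : ℤ)) ∈ natS S

section QaAux

variable (S : NumSgp)

lemma natS_zero : (0 : ℤ) ∈ natS S := ⟨0, S.zero_mem, rfl⟩

lemma natS_nonneg {x : ℤ} (hx : x ∈ natS S) : 0 ≤ x := by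
  obtain ⟨n, _, rfl⟩ := hx; exact Int.ofNat_nonneg n

lemma natS_add {x y : ℤ} (hx : x ∈ natS S) (hy : y ∈ natS S) : x + y ∈ natS S := by
  obtain ⟨n, hn, rfl⟩ := hx; obtain ⟨m, hm, rfl⟩ := hy
  exact ⟨n + m, S.add_mem n hn m hm, by push_cast; ring⟩

lemma natS_coe {n : ℕ} : (n : ℤ) ∈ natS S ↔ n ∈ S.carrier := by
  constructor
  · rintro ⟨m, hm, hmn⟩
    have h2 : (m : ℤ) = (n : ℤ) := hmn
    have : m = n := by exact_mod_cast h2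
    exact this ▸ hm
  · intro h; exact ⟨n, h, rfl⟩

lemma frob_not_mem {a : ℕ} (ha : a ∉ S.carrier) : frob S ∉ S.carrier := by
  have hne : S.carrierᶜ.Nonempty := ⟨a, ha⟩
  have hbdd : BddAbove S.carrierᶜ := S.cofinite.bddAbove
  exact Nat.sSup_mem hne hbdd

lemma gt_frob_mem_nat {a : ℕ} (ha : a ∉ S.carrier) {n : ℕ} (hn : frob S < n) :
    n ∈ S.carrier := by
  by_contra h
  have hbdd : BddAbove S.carrierᶜ := S.cofinite.bddAbove
  have := le_csSup hbdd h
  exact absurd this (not_le.mpr hn)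

lemma gt_frob_mem {a : ℕ} (ha : a ∉ S.carrier) {x : ℤ} (hx : (frob S : ℤ) < x) :
    x ∈ natS S := by
  obtain ⟨n, rfl⟩ := Int.eq_ofNat_of_zero_le (le_trans (Int.ofNat_nonneg _) hx.le)
  exact (natS_coe S).mpr (gt_frob_mem_nat S ha (by exact_mod_cast hx))

lemma frob_notMem_natS {a : ℕ} (ha : a ∉ S.carrier) : (frob S : ℤ) ∉ natS S :=
  fun h => frob_not_mem S ha ((natS_coe S).mp h)

lemma zero_mem_Mdual {a : ℕ} (ha : a ∉ S.carrier) : (0 : ℤ) ∈ Mdual S a := by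
  refine ⟨le_refl 0, ?_⟩
  rw [sub_zero]
  exact fun h => ha ((natS_coe S).mp h)

lemma Mdual_mem_F0 {a : ℕ} (ha : a ∉ S.carrier) : Mdual S a ∈ F0 S := by
  refine ⟨⟨⟨0, zero_mem_Mdual S ha⟩, ⟨0, fun x hx => hx.1⟩, ?_⟩, ?_, fun x hx => hx.1⟩
  · rintro i ⟨hi0, hi⟩ s hs
    refine ⟨add_nonneg hi0 (natS_nonneg S hs), fun h => hi ?_⟩
    have : ((a : ℤ) - i) = ((a : ℤ) - (i + s)) + s := by ring
    rw [this]; exact natS_add S h hs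
  · intro x hx
    refine ⟨natS_nonneg S hx, fun h => ha ?_⟩
    have : (a : ℤ) ∈ natS S := by
      have : (a : ℤ) = x + ((a : ℤ) - x) := by ring
      rw [this]; exact natS_add S hx h
    exact (natS_coe S).mp this

lemma a_notMem_Mdual (a : ℕ) : (a : ℤ) ∉ Mdual S a := by
  rintro ⟨-, h⟩; exact h (by rw [sub_self]; exact natS_zero S)

lemma gt_mem_Mdual (a : ℕ) {x : ℤ} (hx : (a : ℤ) < x) : x ∈ Mdual S a := by
  refine ⟨le_trans (Int.ofNat_nonneg a) hx.le, fun h => ?_⟩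
  have := natS_nonneg S h; omega

lemma subset_Mdual {a : ℕ} {I : Set ℤ} (hI : I ∈ F0 S) (haI : (a : ℤ) ∉ I) :
    I ⊆ Mdual S a := by
  intro x hx
  refine ⟨hI.2.2 hx, fun h => haI ?_⟩
  have : (a : ℤ) = x + ((a : ℤ) - x) := by ring
  rw [this]; exact hI.1.2.2 x hx _ h

lemma subset_vOp {I : Set ℤ} : I ⊆ vOp S I := by
  intro x hx s hs
  rw [add_comm]; exact hs x hx

lemma vOp_mono {I J : Set ℤ} (h : I ⊆ J) : vOp S I ⊆ vOp S J := by
  intro x hx s hs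
  exact hx s (fun j hj => hs j (h hj))

lemma vOp_add_natS {I : Set ℤ} {x t : ℤ} (hx : x ∈ vOp S I) (ht : t ∈ natS S) :
    x + t ∈ vOp S I := by
  intro s hs
  have hts : t + s ∈ idealSub (natS S) I := by
    intro j hj
    have : t + s + j = t + (s + j) := by ring
    rw [this, add_comm]; exact natS_add S (hs j hj) ht
  have := hx _ hts
  have heq : x + t + s = x + (t + s) := by ring
  rw [heq]; exact this

lemma vOp_nonneg {a : ℕ} (ha : a ∉ S.carrier) {I : Set ℤ} (hI : I ∈ F0 S) :
    ∀ x ∈ vOp S I, (0 : ℤ) ≤ x := by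
  intro x hx
  by_contra hneg
  push_neg at hneg
  have hs : ((frob S : ℤ) - x) ∈ idealSub (natS S) I := by
    intro j hj
    have hj0 : (0 : ℤ) ≤ j := hI.2.2 hj
    exact gt_frob_mem S ha (by omega)
  have := hx _ hs
  rw [show x + ((frob S : ℤ) - x) = (frob S : ℤ) by ring] at this
  exact frob_notMem_natS S ha this

/-- Key characterization: `a ∈ (M_a)^v` iff `M_a` is not divisorial. -/
lemma mem_vOp_Mdual_iff {a : ℕ} (ha : a ∉ S.carrier) :
    (a : ℤ) ∈ vOp S (Mdual S a) ↔ ¬ Divisorial S (Mdual S a) := by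
  constructor
  · intro h hdiv
    exact a_notMem_Mdual S a (hdiv ▸ h)
  · intro hdiv
    by_contra h
    apply hdiv
    apply Set.Subset.antisymm _ (subset_vOp S)
    intro x hx
    refine ⟨vOp_nonneg S ha (Mdual_mem_F0 S ha) x hx, fun hax => h ?_⟩
    have : (a : ℤ) = x + ((a : ℤ) - x) := by ring
    rw [this]; exact vOp_add_natS S hx hax

lemma Mdual_mem_Qa {a : ℕ} (ha : a ∉ S.carrier) (h : (a : ℤ) ∈ vOp S (Mdual S a)) :
    Mdual S a ∈ Qa S a :=
  ⟨Mdual_mem_F0 S ha, a_notMem_Mdual S a, fun x hx => gt_mem_Mdual S a hx, h⟩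

lemma mem_starI_of_mem {I J : Set ℤ} {x : ℤ} (hx : x ∈ J) : x ∈ starI S I J := by
  refine ⟨subset_vOp S hx, fun y hy => ?_⟩
  rw [add_comm]; exact hy x hx

/-- If `I` is divisorial then `J^v ⊆ (I − (I − J))`. -/
lemma div_vOp_subset {I J : Set ℤ} (hdiv : Divisorial S I) :
    vOp S J ⊆ idealSub I (idealSub I J) := by
  intro x hx y hy
  rw [← hdiv]
  intro z hz
  have hzy : z + y ∈ idealSub (natS S) J := by
    intro j hj
    have : z + y + j = z + (y + j) := by ring
    rw [this]; exact hz _ (hy j hj)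
  have := hx _ hzy
  rw [show x + y + z = x + (z + y) by ring]; exact this

/-- Part (b) star part: any `I ∈ F₀` with `a ∉ I` and all integers `> a` in `I`
is `⋆_{M_a}`-closed. -/
lemma starle_Mdual {a : ℕ} (ha : a ∉ S.carrier) {I : Set ℤ} (hI : I ∈ F0 S)
    (haI : (a : ℤ) ∉ I) (hgt : ∀ x : ℤ, (a : ℤ) < x → x ∈ I) :
    starle S I (Mdual S a) := by
  have hIM : I ⊆ Mdual S a := subset_Mdual S hI haI
  apply Set.Subset.antisymm _ (fun x hx => mem_starI_of_mem S hx)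
  rintro x ⟨-, hx2⟩
  by_contra hxI
  -- x ∈ M_a since 0 ∈ (M_a − I)
  have h0 : (0 : ℤ) ∈ idealSub (Mdual S a) I := by
    intro j hj; rw [zero_add]; exact hIM hj
  have hxM : x ∈ Mdual S a := by
    have := hx2 0 h0; rwa [add_zero] at this
  have hxa : x < (a : ℤ) := by
    rcases lt_trichotomy x (a : ℤ) with h | h | h
    · exact h
    · exact absurd (h ▸ hxM) (a_notMem_Mdual S a)
    · exact absurd (hgt x h) hxI
  have ht : (a : ℤ) - x ∈ idealSub (Mdual S a) I := by
    intro j hj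
    refine ⟨by have hj0 : (0 : ℤ) ≤ j := hI.2.2 hj; omega, fun hc => hxI ?_⟩
    rw [show (a : ℤ) - ((a : ℤ) - x + j) = x - j by ring] at hc
    have : x = j + (x - j) := by ring
    rw [this]; exact hI.1.2.2 j hj _ hc
  have := hx2 _ ht
  rw [show x + ((a : ℤ) - x) = (a : ℤ) by ring] at this
  exact a_notMem_Mdual S a this

/-- Part (c). -/
lemma starle_Mdual_Mdual {a b : ℕ} (ha : a ∉ S.carrier) (hb : b ∉ S.carrier)
    (hba : b ≤ a) : starle S (Mdual S b) (Mdual S a) := by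
  apply Set.Subset.antisymm _ (fun x hx => mem_starI_of_mem S hx)
  rintro x ⟨hx1, hx2⟩
  refine ⟨vOp_nonneg S hb (Mdual_mem_F0 S hb) x hx1, fun hbx => ?_⟩
  have hy : (a : ℤ) - (b : ℤ) ∈ idealSub (Mdual S a) (Mdual S b) := by
    rintro m ⟨hm0, hm⟩
    have hba' : (b : ℤ) ≤ (a : ℤ) := by exact_mod_cast hba
    refine ⟨by omega, fun hc => hm ?_⟩
    rwa [show (a : ℤ) - ((a : ℤ) - (b : ℤ) + m) = (b : ℤ) - m by ring] at hc
  have := hx2 _ hy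
  exact this.2 (by rwa [show (a : ℤ) - (x + ((a : ℤ) - (b : ℤ))) = (b : ℤ) - x by ring])

end QaAux

/-- Basic properties of the sets `Q_a(S)` and the ideals `M_a`. -/
theorem Qa_basic (S : NumSgp) (a b : ℕ) (ha : a ∉ S.carrier) (hb : b ∉ S.carrier) :
    -- (a) `Q_a ≠ ∅` iff `M_a` is not divisorial
    ((Qa S a).Nonempty ↔ ¬ Divisorial S (Mdual S a)) ∧
    -- (b) if `Q_a ≠ ∅`, then `M_a` is the ⋆-maximum of `Q_a`
    ((Qa S a).Nonempty → Mdual S a ∈ Qa S a ∧ ∀ I ∈ Qa S a, starle S I (Mdual S a)) ∧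
    -- (c) if `b ≤ a` then `M_b ≤⋆ M_a`
    (b ≤ a → starle S (Mdual S b) (Mdual S a)) ∧
    -- (d) if `Q_a = ∅` then `Q_b = ∅` for every `b ≤ a`
    (Qa S a = ∅ → b ≤ a → Qa S b = ∅) ∧
    -- (e) if `a, g − a ∉ S`, then `Q_a ≠ ∅`
    (((frob S : ℤ) - (a : ℤ)) ∉ natS S → (Qa S a).Nonempty) := by
  -- helper: Q_a nonempty → a ∈ (M_a)^v
  have key : ∀ c : ℕ, c ∉ S.carrier → (Qa S c).Nonempty → (c : ℤ) ∈ vOp S (Mdual S c) := by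
    rintro c hc ⟨I, hIF, hcI, hgt, hcv⟩
    exact vOp_mono S (subset_Mdual S hIF hcI) hcv
  have partA : ∀ c : ℕ, c ∉ S.carrier →
      ((Qa S c).Nonempty ↔ ¬ Divisorial S (Mdual S c)) := by
    intro c hc
    constructor
    · intro h; exact (mem_vOp_Mdual_iff S hc).mp (key c hc h)
    · intro h; exact ⟨Mdual S c, Mdual_mem_Qa S hc ((mem_vOp_Mdual_iff S hc).mpr h)⟩
  refine ⟨partA a ha, ?_, starle_Mdual_Mdual S ha hb, ?_, ?_⟩
  · -- (b)
    intro hne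
    refine ⟨Mdual_mem_Qa S ha (key a ha hne), ?_⟩
    rintro I ⟨hIF, haI, hgt, -⟩
    exact starle_Mdual S ha hIF haI hgt
  · -- (d)
    intro hQa hba
    rw [Set.eq_empty_iff_forall_notMem]
    intro I hI
    have hQbne : (Qa S b).Nonempty := ⟨I, hI⟩
    have hdivb : ¬ Divisorial S (Mdual S b) := (partA b hb).mp hQbne
    have hdiva : Divisorial S (Mdual S a) := by
      by_contra h
      obtain ⟨J, hJ⟩ := (partA a ha).mpr h
      rw [Set.eq_empty_iff_forall_notMem] at hQa
      exact hQa J hJ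
    apply hdivb
    have hst := starle_Mdual_Mdual S ha hb hba
    unfold starle starI at hst
    have hsub : vOp S (Mdual S b) ⊆
        idealSub (Mdual S a) (idealSub (Mdual S a) (Mdual S b)) :=
      div_vOp_subset S hdiva
    have : vOp S (Mdual S b) ∩
        idealSub (Mdual S a) (idealSub (Mdual S a) (Mdual S b)) = vOp S (Mdual S b) :=
      Set.inter_eq_self_of_subset_left hsub
    unfold Divisorial
    rw [← this]
    exact hst
  · -- (e)
    intro hga
    refine ⟨Mdual S a, Mdual_mem_Qa S ha ?_⟩
    intro s hs
    by_contra hcon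
    have hs0 : s ∈ natS S := by
      have := hs 0 (zero_mem_Mdual S ha)
      rwa [add_zero] at this
    have hsnn : (0 : ℤ) ≤ s := natS_nonneg S hs0
    have hle : (a : ℤ) + s ≤ (frob S : ℤ) := by
      by_contra h
      push_neg at h
      exact hcon (gt_frob_mem S ha h)
    rcases eq_or_lt_of_le hle with heq | hlt
    · exact hga (by rwa [show (frob S : ℤ) - (a : ℤ) = s by omega])
    · have hm : (frob S : ℤ) - s ∈ Mdual S a := by
        refine ⟨by omega, fun hc => ?_⟩
        have := natS_nonneg S hc; omega
      have := hs _ hm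
      rw [show s + ((frob S : ℤ) - s) = (frob S : ℤ) by ring] at this
      exact frob_notMem_natS S ha this
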